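/- For every graph G, the critical difference of G equals the critical difference of the induced subgraph G[L(G)], where L(G) is Larson's set, i.e., d(G) = d(G[L(G)]). -/
import Mathlib


open Finset

variable {V : Type*} [Fintype V] [DecidableEq V] (G : SimpleGraph V) [DecidableRel G.Adj]

/-- `N(S)`: the set of vertices adjacent to some vertex of `S`. -/
def nbhd (S : Finset V) : Finset V := S.biUnion (fun v => G.neighborFinset v)

/-- `S` is an independent set of `G`. -/
def Indep (S : Finset V) : Prop := ∀ u ∈ S, ∀ v ∈ S, ¬ G.Adj u v

/-- The difference `d_G(S) = |S| - |N(S)|`. -/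
def diffI (S : Finset V) : ℤ := (S.card : ℤ) - ((nbhd G S).card : ℤ)

/-- `S` is a maximum independent set of `G`. -/
def IsMaxIndep (S : Finset V) : Prop :=
  Indep G S ∧ ∀ T : Finset V, Indep G T → T.card ≤ S.card

/-- `I` is a critical independent set of `G`. -/
def IsCritIndep (I : Finset V) : Prop :=
  Indep G I ∧ ∀ J : Finset V, Indep G J → diffI G J ≤ diffI G I

/-- `I` is a maximum critical independent set of `G`. -/
def IsMaxCritIndep (I : Finset V) : Prop :=
  IsCritIndep G I ∧ ∀ J : Finset V, IsCritIndep G J → J.card ≤ I.card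

/-- `core(G)`: intersection of all maximum independent sets. -/
def core : Set V := {v | ∀ S : Finset V, IsMaxIndep G S → v ∈ S}

/-- `corona(G)`: union of all maximum independent sets. -/
def corona : Set V := {v | ∃ S : Finset V, IsMaxIndep G S ∧ v ∈ S}

/-- `nucleus(G)`: intersection of all maximum critical independent sets. -/
def nucleus : Set V := {v | ∀ S : Finset V, IsMaxCritIndep G S → v ∈ S}

/-- `diadem(G)`: union of all maximum critical independent sets. -/
def diadem : Set V := {v | ∃ S : Finset V, IsMaxCritIndep G S ∧ v ∈ S}

/-- `ker(G)`: intersection of all critical independent sets. -/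
def kerS : Set V := {v | ∀ S : Finset V, IsCritIndep G S → v ∈ S}

/-- A matching of `G`, given as an involution of the vertex set:
unmatched vertices are fixed points, matched vertices are sent to their partner. -/
def IsMatching (M : V → V) : Prop :=
  Function.Involutive M ∧ ∀ v, M v ≠ v → G.Adj v (M v)

/-- Twice the number of edges of the matching `M`, i.e. the number of matched vertices. -/
def matchSize (M : V → V) : ℕ := (univ.filter fun v => M v ≠ v).card

/-- `M` is a maximum matching of `G`. -/
def IsMaxMatching (M : V → V) : Prop :=
  IsMatching G M ∧ ∀ M' : V → V, IsMatching G M' → matchSize M' ≤ matchSize M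

/-- `M` is a matching of the induced subgraph `G[L]`. -/
def IsMatchingOn (L : Finset V) (M : V → V) : Prop :=
  IsMatching G M ∧ ∀ v, M v ≠ v → v ∈ L

/-- `M` is a maximum matching of the induced subgraph `G[L]`. -/
def IsMaxMatchingOn (L : Finset V) (M : V → V) : Prop :=
  IsMatchingOn G L M ∧ ∀ M' : V → V, IsMatchingOn G L M' → matchSize M' ≤ matchSize M

/-- `S` is a maximum independent set of the induced subgraph `G[L]`. -/
def IsMaxIndepOn (L : Finset V) (S : Finset V) : Prop :=
  S ⊆ L ∧ Indep G S ∧ ∀ T : Finset V, T ⊆ L → Indep G T → T.card ≤ S.card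

/-- `core` of the induced subgraph `G[L]`. -/
def coreOn (L : Finset V) : Set V := {v | ∀ S : Finset V, IsMaxIndepOn G L S → v ∈ S}

/-- `D(G[L])`: vertices of `L` missed by some maximum matching of `G[L]`. -/
def Dset (L : Finset V) : Set V := {v | v ∈ L ∧ ∃ M : V → V, IsMaxMatchingOn G L M ∧ M v = v}

/-- The Larson boundary `∂_L(G)` of the set `L`. -/
def boundaryL (L : Finset V) : Set V := {v | v ∈ L ∧ ∃ w, w ∉ L ∧ G.Adj v w}

/-- The critical difference `d(G)`. -/
noncomputable def critDiff : ℤ := sSup {d : ℤ | ∃ X : Finset V, diffI G X = d}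

/-- The difference of `S` computed in the induced subgraph `G[L]`. -/
def diffOn (L : Finset V) (S : Finset V) : ℤ := (S.card : ℤ) - ((nbhd G S ∩ L).card : ℤ)

/-- The critical difference of the induced subgraph `G[L]`. -/
noncomputable def critDiffOn (L : Finset V) : ℤ := sSup {d : ℤ | ∃ X : Finset V, X ⊆ L ∧ diffOn G L X = d}

/-- `G` is a König–Egerváry graph: `α(G) + μ(G) = |V(G)|`. -/
def KonigEgervary : Prop :=
  ∃ (S : Finset V) (M : V → V), IsMaxIndep G S ∧ IsMaxMatching G M ∧
    2 * S.card + matchSize M = 2 * Fintype.card V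
section helpers

variable {V : Type*} [Fintype V] [DecidableEq V] (G : SimpleGraph V) [DecidableRel G.Adj]

lemma nbhd_mono {A B : Finset V} (h : A ⊆ B) : nbhd G A ⊆ nbhd G B :=
  Finset.biUnion_subset_biUnion_of_subset_left _ h

lemma mem_nbhd {v : V} {S : Finset V} : v ∈ nbhd G S ↔ ∃ u ∈ S, G.Adj u v := by
  simp [nbhd, SimpleGraph.mem_neighborFinset]

lemma indep_disjoint_nbhd {J : Finset V} (hJ : Indep G J) : J ∩ nbhd G J = ∅ := by
  ext v
  simp only [Finset.mem_inter, Finset.notMem_empty, iff_false]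
  rintro ⟨hvJ, hvN⟩
  obtain ⟨u, huJ, hadj⟩ := (mem_nbhd G).mp hvN
  exact hJ u huJ v hvJ hadj

/-- Lemma A: a critical independent set maximizes `diffI` over ALL sets. -/
lemma diffI_le_crit {J : Finset V} (hJ : IsCritIndep G J) (X : Finset V) :
    diffI G X ≤ diffI G J := by
  classical
  set Y := X \ nbhd G X with hY
  have hIndY : Indep G Y := by
    intro u hu v hv hadj
    have hvX : v ∈ nbhd G X := (mem_nbhd G).mpr ⟨u, (Finset.mem_sdiff.mp hu).1, hadj⟩
    exact (Finset.mem_sdiff.mp hv).2 hvX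
  have h1 : Y.card + (X ∩ nbhd G X).card = X.card :=
    Finset.card_sdiff_add_card_inter _ _
  have hsub : nbhd G Y ⊆ nbhd G X \ (X ∩ nbhd G X) := by
    intro w hw
    obtain ⟨y, hyY, hadj⟩ := (mem_nbhd G).mp hw
    have hyX := (Finset.mem_sdiff.mp hyY).1
    refine Finset.mem_sdiff.mpr ⟨(mem_nbhd G).mpr ⟨y, hyX, hadj⟩, ?_⟩
    intro hwX
    exact (Finset.mem_sdiff.mp hyY).2 ((mem_nbhd G).mpr ⟨w, (Finset.mem_inter.mp hwX).1, hadj.symm⟩)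
  have h2 : (nbhd G Y).card ≤ (nbhd G X \ (X ∩ nbhd G X)).card := Finset.card_le_card hsub
  have h3 : (nbhd G X \ (X ∩ nbhd G X)).card + (X ∩ nbhd G X).card = (nbhd G X).card :=
    Finset.card_sdiff_add_card_eq_card Finset.inter_subset_right
  have hXY : diffI G X ≤ diffI G Y := by
    unfold diffI
    omega
  exact hXY.trans (hJ.2 Y hIndY)

/-- Lemma B: Hall's condition for `N(J)` into `J`. -/
lemma hall_cond {J : Finset V} (hJ : IsCritIndep G J) (S : Finset V) (hS : S ⊆ nbhd G J) :
    S.card ≤ (nbhd G S ∩ J).card := by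
  classical
  set X := J \ nbhd G S with hX
  have hIndX : Indep G X := fun u hu v hv =>
    hJ.1 u (Finset.mem_sdiff.mp hu).1 v (Finset.mem_sdiff.mp hv).1
  have hcrit := hJ.2 X hIndX
  have h1 : X.card + (J ∩ nbhd G S).card = J.card :=
    Finset.card_sdiff_add_card_inter _ _
  have hsub : nbhd G X ⊆ nbhd G J \ S := by
    intro w hw
    obtain ⟨x, hxX, hadj⟩ := (mem_nbhd G).mp hw
    refine Finset.mem_sdiff.mpr ⟨(mem_nbhd G).mpr ⟨x, (Finset.mem_sdiff.mp hxX).1, hadj⟩, ?_⟩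
    intro hwS
    exact (Finset.mem_sdiff.mp hxX).2 ((mem_nbhd G).mpr ⟨w, hwS, hadj.symm⟩)
  have h2 : (nbhd G X).card ≤ (nbhd G J \ S).card := Finset.card_le_card hsub
  have h3 : (nbhd G J \ S).card + S.card = (nbhd G J).card :=
    Finset.card_sdiff_add_card_eq_card hS
  have h4 : (nbhd G S ∩ J).card = (J ∩ nbhd G S).card := by rw [Finset.inter_comm]
  unfold diffI at hcrit
  omega

/-- A Hall injection from `N(J)` into `J` along edges. -/
lemma exists_hall_injection {J : Finset V} (hJ : IsCritIndep G J) :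
    ∃ f : {x // x ∈ nbhd G J} → V, Function.Injective f ∧
      ∀ x : {x // x ∈ nbhd G J}, f x ∈ G.neighborFinset x.1 ∩ J := by
  classical
  rw [← Finset.all_card_le_biUnion_card_iff_exists_injective]
  intro s
  have himg : (s.image Subtype.val).biUnion (fun v => G.neighborFinset v ∩ J)
      = s.biUnion (fun v => G.neighborFinset v.1 ∩ J) := by
    ext w
    simp [Finset.mem_biUnion]
  have hcard : (s.image Subtype.val).card = s.card :=
    Finset.card_image_of_injective _ Subtype.val_injective
  have hsub : s.image Subtype.val ⊆ nbhd G J := by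
    intro v hv
    obtain ⟨⟨v, hvN⟩, _, rfl⟩ := Finset.mem_image.mp hv
    exact hvN
  have hHall := hall_cond G hJ _ hsub
  have : nbhd G (s.image Subtype.val) ∩ J
      ⊆ (s.image Subtype.val).biUnion (fun v => G.neighborFinset v ∩ J) := by
    intro w hw
    obtain ⟨hwN, hwJ⟩ := Finset.mem_inter.mp hw
    obtain ⟨u, hu, hadj⟩ := (mem_nbhd G).mp hwN
    exact Finset.mem_biUnion.mpr ⟨u, hu, Finset.mem_inter.mpr
      ⟨(SimpleGraph.mem_neighborFinset G u w).mpr hadj, hwJ⟩⟩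
  calc s.card = (s.image Subtype.val).card := hcard.symm
    _ ≤ (nbhd G (s.image Subtype.val) ∩ J).card := hHall
    _ ≤ ((s.image Subtype.val).biUnion (fun v => G.neighborFinset v ∩ J)).card :=
        Finset.card_le_card this
    _ = (s.biUnion (fun v => G.neighborFinset v.1 ∩ J)).card := by rw [himg]

end helpers

theorem stmt6 (J : Finset V) (hJ : IsMaxCritIndep G J) :
    critDiff G = critDiffOn G (J ∪ nbhd G J) := by
  classical
  set L := J ∪ nbhd G J with hL
  have hJcrit : IsCritIndep G J := hJ.1
  have hG1 : IsGreatest {d : ℤ | ∃ X : Finset V, diffI G X = d} (diffI G J) := by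
    constructor
    · exact ⟨J, rfl⟩
    · rintro d ⟨X, rfl⟩
      exact diffI_le_crit G hJcrit X
  obtain ⟨f, hfinj, hf⟩ := exists_hall_injection G hJcrit
  have hdisjJ : J ∩ nbhd G J = ∅ := indep_disjoint_nbhd G hJcrit.1
  have hG2 : IsGreatest {d : ℤ | ∃ X : Finset V, X ⊆ L ∧ diffOn G L X = d} (diffI G J) := by
    constructor
    · refine ⟨J, Finset.subset_union_left, ?_⟩
      have : nbhd G J ∩ L = nbhd G J := Finset.inter_eq_left.mpr Finset.subset_union_right
      unfold diffOn diffI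
      rw [this]
    · rintro d ⟨X, hX, rfl⟩
      set A := X ∩ J with hA
      set B := X ∩ nbhd G J with hB
      have hXAB : X = A ∪ B := by
        ext x
        simp only [hA, hB, Finset.mem_union, Finset.mem_inter]
        constructor
        · intro hx
          rcases Finset.mem_union.mp (hX hx) with h | h
          · exact Or.inl ⟨hx, h⟩
          · exact Or.inr ⟨hx, h⟩
        · rintro (⟨h, _⟩ | ⟨h, _⟩) <;> exact h
      have h6 : X.card ≤ A.card + B.card := by
        rw [hXAB]; exact Finset.card_union_le _ _
      -- the matched copy of B inside J
      set Bi : Finset {x // x ∈ nbhd G J} :=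
        Finset.univ.filter (fun v => v.1 ∈ B) with hBi
      have hBiim : Bi.image Subtype.val = B := by
        ext w
        simp only [hBi, Finset.mem_image, Finset.mem_filter, Finset.mem_univ, true_and]
        constructor
        · rintro ⟨v, hv, rfl⟩; exact hv
        · intro hw
          exact ⟨⟨w, (Finset.mem_inter.mp hw).2⟩, hw, rfl⟩
      have hBicard : Bi.card = B.card := by
        rw [← hBiim]; exact (Finset.card_image_of_injective _ Subtype.val_injective).symm
      set FB : Finset V := Bi.image f with hFB
      have hFBcard : FB.card = B.card := by
        rw [hFB, Finset.card_image_of_injective _ hfinj, hBicard]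
      have hFBJ : FB ⊆ J := by
        intro w hw
        obtain ⟨v, _, rfl⟩ := Finset.mem_image.mp hw
        exact (Finset.mem_inter.mp (hf v)).2
      have hFBsub : FB ⊆ nbhd G X ∩ L := by
        intro w hw
        obtain ⟨v, hv, rfl⟩ := Finset.mem_image.mp hw
        have hvB : v.1 ∈ B := (Finset.mem_filter.mp hv).2
        have hvX : v.1 ∈ X := (Finset.mem_inter.mp hvB).1
        have hadj : G.Adj v.1 (f v) :=
          (SimpleGraph.mem_neighborFinset G v.1 (f v)).mp (Finset.mem_inter.mp (hf v)).1
        refine Finset.mem_inter.mpr ⟨(mem_nbhd G).mpr ⟨v.1, hvX, hadj⟩, ?_⟩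
        exact Finset.mem_union_left _ ((Finset.mem_inter.mp (hf v)).2)
      have hNAsub : nbhd G A ⊆ nbhd G X ∩ L := by
        intro w hw
        have h1 : w ∈ nbhd G X := nbhd_mono G (Finset.inter_subset_left) hw
        have h2 : w ∈ nbhd G J := nbhd_mono G (Finset.inter_subset_right) hw
        exact Finset.mem_inter.mpr ⟨h1, Finset.mem_union_right _ h2⟩
      have hdisj : Disjoint (nbhd G A) FB := by
        rw [Finset.disjoint_left]
        intro w hw hwFB
        have h2 : w ∈ nbhd G J := nbhd_mono G (Finset.inter_subset_right) hw
        have : w ∈ J ∩ nbhd G J := Finset.mem_inter.mpr ⟨hFBJ hwFB, h2⟩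
        rw [hdisjJ] at this
        exact absurd this (Finset.notMem_empty w)
      have h5 : (nbhd G A).card + B.card ≤ (nbhd G X ∩ L).card := by
        have := Finset.card_le_card (Finset.union_subset hNAsub hFBsub)
        rwa [Finset.card_union_of_disjoint hdisj, hFBcard] at this
      have hAind : Indep G A := fun u hu v hv =>
        hJcrit.1 u (Finset.mem_inter.mp hu).2 v (Finset.mem_inter.mp hv).2
      have h7 : diffI G A ≤ diffI G J := hJcrit.2 A hAind
      unfold diffOn diffI at h7 ⊢
      omega
  unfold critDiff critDiffOn
  rw [hG1.csSup_eq, hG2.csSup_eq]
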